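/- Let q be a real number with q > 1 and let a be a nonzero complex number. Let T_w and T_s be the ℂ-linear endomorphisms of ℂ² defined on the standard basis (e, f) by T_w(e) = f, T_w(f) = q³·e + (q³−1)·f, and T_s(e) = (q−1)·e + (q/a)·f, T_s(f) = a·e. Then there exists a nonzero vector v ∈ ℂ² that is simultaneously an eigenvector of T_w and of T_s if and only if a ∈ {1, −q, −q³, q⁴}. -/

import Mathlib

/-!
A nonzero `v = (x, y)` in the plane is an eigenvector of `T` exactly when the determinant of
`(v, T v)` vanishes. For `T_w` this determinant is `(x - y) (x + q³ y)`, so the eigenlines of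
`T_w` are spanned by `(1, 1)` and `(q³, -1)`. For `T_s` it is, up to the unit `a`, the binary
quadratic form `q x² - a (q - 1) x y - a² y²`, whose values at `(1, 1)` and `(q³, -1)` are
`-(a - 1) (a + q)` and `-(a + q³) (a - q⁴)`.
-/

theorem Pi.fin_two_ne_zero_iff {M : Type*} [Zero M] {v : Fin 2 → M} :
    v ≠ 0 ↔ v 0 ≠ 0 ∨ v 1 ≠ 0 := by
  rw [Ne, funext_iff, Fin.forall_fin_two]
  tauto

theorem LinearMap.apply_fin_two {R M : Type*} [CommSemiring R] [AddCommMonoid M] [Module R M]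
    (T : (Fin 2 → R) →ₗ[R] M) (v : Fin 2 → R) :
    T v = v 0 • T ![1, 0] + v 1 • T ![0, 1] := by
  conv_lhs => rw [show v = v 0 • ![1, 0] + v 1 • ![0, 1] by ext i; fin_cases i <;> simp]
  rw [map_add, map_smul, map_smul]

theorem exists_eq_smul_iff_mul_sub_mul_eq_zero {K : Type*} [Field K] {v w : Fin 2 → K}
    (hv : v ≠ 0) :
    (∃ μ : K, w = μ • v) ↔ v 0 * w 1 - v 1 * w 0 = 0 := by
  constructor
  · rintro ⟨μ, rfl⟩
    simp only [Pi.smul_apply, smul_eq_mul]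
    ring
  · intro h
    rcases Pi.fin_two_ne_zero_iff.mp hv with h0 | h1
    · refine ⟨w 0 / v 0, ?_⟩
      ext i
      fin_cases i
      · simp [h0]
      · simp only [Fin.mk_one, Pi.smul_apply, smul_eq_mul]
        field_simp
        linear_combination h
    · refine ⟨w 1 / v 1, ?_⟩
      ext i
      fin_cases i
      · simp only [Fin.zero_eta, Pi.smul_apply, smul_eq_mul]
        field_simp
        linear_combination -h
      · simp [h1]

theorem exists_ne_zero_common_zero_iff {K : Type*} [Field K] (q a : K) :
    (∃ v : Fin 2 → K, v ≠ 0 ∧ (v 0 - v 1) * (v 0 + q ^ 3 * v 1) = 0 ∧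
        q * v 0 ^ 2 - a * (q - 1) * v 0 * v 1 - a ^ 2 * v 1 ^ 2 = 0) ↔
      (a - 1) * (a + q) * ((a + q ^ 3) * (a - q ^ 4)) = 0 := by
  constructor
  · rintro ⟨v, hv, hw, hs⟩
    rcases mul_eq_zero.mp hw with hw | hw
    · have hx : v 0 ≠ 0 := by
        rintro h0
        rcases Pi.fin_two_ne_zero_iff.mp hv with h | h
        exacts [h h0, h (by linear_combination h0 - hw)]
      have : (a - 1) * (a + q) * v 0 ^ 2 = 0 := by
        linear_combination -hs + (a * (q - 1) * v 0 + a ^ 2 * (v 0 + v 1)) * hw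
      simp [(mul_eq_zero.mp this).resolve_right (pow_ne_zero 2 hx)]
    · have hy : v 1 ≠ 0 := by
        rintro h1
        rcases Pi.fin_two_ne_zero_iff.mp hv with h | h
        exacts [h (by linear_combination hw - q ^ 3 * h1), h h1]
      have : (a + q ^ 3) * (a - q ^ 4) * v 1 ^ 2 = 0 := by
        linear_combination -hs + (q * (v 0 - q ^ 3 * v 1) - a * (q - 1) * v 1) * hw
      simp [(mul_eq_zero.mp this).resolve_right (pow_ne_zero 2 hy)]
  · intro h
    rcases mul_eq_zero.mp h with h | h
    · refine ⟨![1, 1], by simp, by simp, ?_⟩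
      simp only [Matrix.cons_val_zero, Matrix.cons_val_one, Matrix.cons_val_fin_one]
      linear_combination -h
    · refine ⟨![q ^ 3, -1], by simp, by simp, ?_⟩
      simp only [Matrix.cons_val_zero, Matrix.cons_val_one, Matrix.cons_val_fin_one]
      linear_combination -h

theorem stmt8_general (q : ℝ) (a : ℂ) (ha : a ≠ 0)
    (Tw Ts : Module.End ℂ (Fin 2 → ℂ))
    (hTwe : Tw ![1, 0] = ![0, 1])
    (hTwf : Tw ![0, 1] = ((q : ℂ) ^ 3) • ![1, 0] + ((q : ℂ) ^ 3 - 1) • ![0, 1])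
    (hTse : Ts ![1, 0] = ((q : ℂ) - 1) • ![1, 0] + ((q : ℂ) / a) • ![0, 1])
    (hTsf : Ts ![0, 1] = a • ![1, 0]) :
    (∃ v : Fin 2 → ℂ, v ≠ 0 ∧ (∃ μ : ℂ, Tw v = μ • v) ∧ (∃ ν : ℂ, Ts v = ν • v)) ↔
      a ∈ ({1, -(q : ℂ), -(q : ℂ) ^ 3, (q : ℂ) ^ 4} : Set ℂ) := by
  have hTw_det (v : Fin 2 → ℂ) :
      v 0 * Tw v 1 - v 1 * Tw v 0 = (v 0 - v 1) * (v 0 + (q : ℂ) ^ 3 * v 1) := by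
    rw [LinearMap.apply_fin_two Tw v, hTwe, hTwf]
    simp only [Pi.add_apply, Pi.smul_apply, smul_eq_mul, Matrix.cons_val_zero, Matrix.cons_val_one,
      Matrix.cons_val_fin_one]
    ring
  have hTs_det (v : Fin 2 → ℂ) :
      a * (v 0 * Ts v 1 - v 1 * Ts v 0) =
        (q : ℂ) * v 0 ^ 2 - a * ((q : ℂ) - 1) * v 0 * v 1 - a ^ 2 * v 1 ^ 2 := by
    rw [LinearMap.apply_fin_two Ts v, hTse, hTsf]
    simp only [Pi.add_apply, Pi.smul_apply, smul_eq_mul, Matrix.cons_val_zero, Matrix.cons_val_one,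
      Matrix.cons_val_fin_one]
    field_simp
    ring
  calc _ ↔ ∃ v : Fin 2 → ℂ, v ≠ 0 ∧ (v 0 - v 1) * (v 0 + (q : ℂ) ^ 3 * v 1) = 0 ∧
        (q : ℂ) * v 0 ^ 2 - a * ((q : ℂ) - 1) * v 0 * v 1 - a ^ 2 * v 1 ^ 2 = 0 := by
        refine exists_congr fun v ↦ and_congr_right fun hv ↦ ?_
        rw [exists_eq_smul_iff_mul_sub_mul_eq_zero hv, exists_eq_smul_iff_mul_sub_mul_eq_zero hv,
          hTw_det, ← hTs_det, mul_eq_zero_iff_left ha]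
    _ ↔ _ := by
        rw [exists_ne_zero_common_zero_iff]
        simp [sub_eq_zero, add_eq_zero_iff_eq_neg, or_assoc]

/-- Reducibility criterion for unramified principal series of `SU_{2,1}`:
the Hecke operators `T_w` (`e ↦ f`, `f ↦ q³ e + (q³-1) f`) and
`T_s` (`e ↦ (q-1) e + (q/a) f`, `f ↦ a e`) have a common eigenvector
iff `a ∈ {1, -q, -q³, q⁴}`. -/
theorem stmt8 (q : ℝ) (hq : 1 < q) (a : ℂ) (ha : a ≠ 0)
    (Tw Ts : Module.End ℂ (Fin 2 → ℂ))
    (hTwe : Tw ![1, 0] = ![0, 1])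
    (hTwf : Tw ![0, 1] = ((q : ℂ) ^ 3) • ![1, 0] + ((q : ℂ) ^ 3 - 1) • ![0, 1])
    (hTse : Ts ![1, 0] = ((q : ℂ) - 1) • ![1, 0] + ((q : ℂ) / a) • ![0, 1])
    (hTsf : Ts ![0, 1] = a • ![1, 0]) :
    (∃ v : Fin 2 → ℂ, v ≠ 0 ∧ (∃ μ : ℂ, Tw v = μ • v) ∧ (∃ ν : ℂ, Ts v = ν • v)) ↔
      a ∈ ({1, -(q : ℂ), -(q : ℂ) ^ 3, (q : ℂ) ^ 4} : Set ℂ) :=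
  stmt8_general q a ha Tw Ts hTwe hTwf hTse hTsf
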